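/- Let G = (N, Σ, S, P) be a normalized spine grammar with spine direction d. Then π(F(S(G))_S) = T(G), where π is the relabeling projecting each annotated symbol to its terminal component, i.e., π(α_n) = α and π((σ, n₁, n₂)) = σ. More generally, for every nullary nonterminal n, π(F(S(G))_n) equals the set of terminal trees derivable in G from n. -/

import Mathlib

/-! ### Moore push-down automata -/

/-- A Moore push-down automaton (MPDA).  `trans` contains tuples
`(q, γ, γ', q')` where `γ` is the (optional) popped symbol and `γ'` the
(optional) pushed symbol; a transition never pops and pushes simultaneously. -/
structure MPDA (Q S Γ : Type) where
  trans : Set (Q × Option Γ × Option Γ × Q)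
  trans_valid : ∀ t ∈ trans, t.2.1 = none ∨ t.2.2.1 = none
  out : Q → S
  init : Set Q
  final : Set Q

namespace MPDA

variable {Q S Γ : Type} (M : MPDA Q S Γ)

/-- One move between configurations `⟨q, γα⟩ ⊢ ⟨q', γ'α⟩` (the replaced
stack prefix `γ` together with the rest `α` must be nonempty). -/
def Move (c c' : Q × List Γ) : Prop :=
  ∃ q γ γ' q', ∃ α : List Γ, (q, γ, γ', q') ∈ M.trans ∧
    c = (q, γ.toList ++ α) ∧ c' = (q', γ'.toList ++ α) ∧ γ.toList ++ α ≠ []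

/-- An accepting run: a nonempty sequence of configurations, successively
related by moves, starting in an initial state with a single stack symbol and
ending in a final state with empty stack. -/
def AcceptingRun (cs : List (Q × List Γ)) : Prop :=
  cs.Chain' M.Move ∧
  (∃ q0 ∈ M.init, ∃ g : Γ, cs.head? = some (q0, [g])) ∧
  (∃ qf ∈ M.final, cs.getLast? = some (qf, ([] : List Γ)))

/-- The language accepted by the MPDA: the outputs, symbol by symbol, of the
states attained during accepting runs. -/
def language : Language S :=
  { w | ∃ cs, M.AcceptingRun cs ∧ w = cs.map fun c => M.out c.1 }

/-- Pop-normalization: the state entered when popping a stack symbol is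
uniquely determined by that symbol. -/
def PopNormalized : Prop :=
  ∃ ret : Γ → Q, ∀ q γ q', (q, some γ, none, q') ∈ M.trans → q' = ret γ

end MPDA

/-! ### The `Next` operation on languages -/

/-- `nextWord [σ1, …, σn] = [(σ2, σ1), (σ3, σ2), …, (◁, σn)]`, where the fresh
symbol `◁` is modelled by `none`. -/
def nextWord {S : Type} : List S → List (Option S × S)
  | [] => []
  | [a] => [(none, a)]
  | a :: b :: r => (some b, a) :: nextWord (b :: r)

/-- The `Next` operation on languages. -/
def nextLang {S : Type} (L : Language S) : Language (Option S × S) :=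
  { w | ∃ v ∈ L, w = nextWord v }

/-! ### Binary trees over ranked alphabets (ranks 0, 1, 2) -/

/-- Trees with leaf labels `L`, unary labels `U` and binary labels `B`. -/
inductive Tree3 (L U B : Type) : Type
  | leaf : L → Tree3 L U B
  | un : U → Tree3 L U B → Tree3 L U B
  | bin : B → Tree3 L U B → Tree3 L U B → Tree3 L U B

namespace Tree3

/-- A relabeling `(f0, f1, f2)` applied node-wise. -/
def map {L U B L' U' B' : Type} (f0 : L → L') (f1 : U → U') (f2 : B → B') :
    Tree3 L U B → Tree3 L' U' B'
  | leaf a => leaf (f0 a)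
  | un u t => un (f1 u) (map f0 f1 f2 t)
  | bin b t₁ t₂ => bin (f2 b) (map f0 f1 f2 t₁) (map f0 f1 f2 t₂)

/-- The tree contains a leaf labeled `a`. -/
def hasLeaf {L U B : Type} (a : L) : Tree3 L U B → Prop
  | leaf x => x = a
  | un _ t => t.hasLeaf a
  | bin _ t₁ t₂ => t₁.hasLeaf a ∨ t₂.hasLeaf a

/-- The tree contains no unary symbol. -/
def noUnary {L U B : Type} : Tree3 L U B → Prop
  | leaf _ => True
  | un _ _ => False
  | bin _ t₁ t₂ => t₁.noUnary ∧ t₂.noUnary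

/-- Number of nodes. -/
def size {L U B : Type} : Tree3 L U B → ℕ
  | leaf _ => 1
  | un _ t => t.size + 1
  | bin _ t₁ t₂ => t₁.size + t₂.size + 1

end Tree3

/-- One-hole contexts over the same signature. -/
inductive Ctx3 (L U B : Type) : Type
  | hole : Ctx3 L U B
  | un : U → Ctx3 L U B → Ctx3 L U B
  | binL : B → Ctx3 L U B → Tree3 L U B → Ctx3 L U B
  | binR : B → Tree3 L U B → Ctx3 L U B → Ctx3 L U B

/-- Substitution of a tree into the hole of a context. -/
def Ctx3.subst {L U B : Type} : Ctx3 L U B → Tree3 L U B → Tree3 L U B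
  | .hole, t => t
  | .un u c, t => .un u (c.subst t)
  | .binL b c s, t => .bin b (c.subst t) s
  | .binR b s c, t => .bin b s (c.subst t)

/-- The root-to-hole path of the context follows the direction `d` at every
binary symbol on it (`false` = first child, `true` = second child). -/
def Ctx3.SpineOk {L U B : Type} (d : B → Bool) : Ctx3 L U B → Prop
  | .hole => True
  | .un _ c => c.SpineOk d
  | .binL b c _ => d b = false ∧ c.SpineOk d
  | .binR b _ c => d b = true ∧ c.SpineOk d

/-! ### Simple monadic context-free tree grammars and spine grammars -/

/-- Sentential forms: trees over binary terminals `T2` and unary nonterminals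
`N1`, with leaves labeled by nullary nonterminals `N0` or nullary terminals
`T0`. -/
abbrev SForm (N0 N1 T0 T2 : Type) := Tree3 (N0 ⊕ T0) N1 T2

/-- A simple monadic context-free tree grammar (sCFTG). -/
structure SCFTG (N0 N1 T0 T2 : Type) where
  start : N0
  P0 : Set (N0 × SForm N0 N1 T0 T2)
  P1 : Set (N1 × Ctx3 (N0 ⊕ T0) N1 T2)
  P0_fin : P0.Finite
  P1_fin : P1.Finite

namespace SCFTG

variable {N0 N1 T0 T2 : Type}

/-- One derivation step. -/
inductive Step (G : SCFTG N0 N1 T0 T2) :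
    SForm N0 N1 T0 T2 → SForm N0 N1 T0 T2 → Prop
  | p0 (C : Ctx3 (N0 ⊕ T0) N1 T2) (n : N0) (r : SForm N0 N1 T0 T2) :
      (n, r) ∈ G.P0 → Step G (C.subst (.leaf (.inl n))) (C.subst r)
  | p1 (C : Ctx3 (N0 ⊕ T0) N1 T2) (n : N1) (r : Ctx3 (N0 ⊕ T0) N1 T2)
      (t' : SForm N0 N1 T0 T2) :
      (n, r) ∈ G.P1 → Step G (C.subst (.un n t')) (C.subst (r.subst t'))

/-- Derivation: reflexive-transitive closure of `Step`. -/
def Derives (G : SCFTG N0 N1 T0 T2) :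
    SForm N0 N1 T0 T2 → SForm N0 N1 T0 T2 → Prop :=
  Relation.ReflTransGen G.Step

/-- Embedding of terminal trees into sentential forms. -/
def embed (t : Tree3 T0 Empty T2) : SForm N0 N1 T0 T2 :=
  t.map Sum.inr (fun e => e.elim) id

/-- Set of terminal trees derivable from the nullary nonterminal `n`. -/
def derivFrom (G : SCFTG N0 N1 T0 T2) (n : N0) : Set (Tree3 T0 Empty T2) :=
  { t | G.Derives (.leaf (.inl n)) (embed t) }

/-- The generated tree language `T(G)`. -/
def lang (G : SCFTG N0 N1 T0 T2) : Set (Tree3 T0 Empty T2) :=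
  G.derivFrom G.start

/-- `G` together with `d` is a spine grammar: in every unary production the
root-to-hole path follows the spine direction `d`. -/
def IsSpine (G : SCFTG N0 N1 T0 T2) (d : T2 → Bool) : Prop :=
  ∀ p ∈ G.P1, Ctx3.SpineOk d p.2

/-- Normal form of spine grammars: start, chain and terminal productions;
the start nonterminal does not occur in right-hand sides. -/
def InNormalForm (G : SCFTG N0 N1 T0 T2) : Prop :=
  (∀ p ∈ G.P0, ∃ α : T0,
      p.2 = .leaf (.inr α) ∨ ∃ b : N1, p.2 = .un b (.leaf (.inr α))) ∧
  (∀ p ∈ G.P1,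
      (∃ b₁ b₂ : N1, p.2 = .un b₁ (.un b₂ .hole)) ∨
      (∃ (σ : T2) (a : N0), a ≠ G.start ∧
        (p.2 = .binL σ .hole (.leaf (.inl a)) ∨
         p.2 = .binR σ (.leaf (.inl a)) .hole)))

/-- `G` with all productions for nullary nonterminals removed. -/
def chainOnly (G : SCFTG N0 N1 T0 T2) : SCFTG N0 N1 T0 T2 where
  start := G.start
  P0 := ∅
  P1 := G.P1
  P0_fin := Set.finite_empty
  P1_fin := G.P1_fin

/-- The spinal trees `I_G(n)` for the nullary nonterminal `n`: one step of `G`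
followed by arbitrarily many steps using only unary productions, until no
unary nonterminal remains. -/
def spinalTrees (G : SCFTG N0 N1 T0 T2) (n : N0) : Set (SForm N0 N1 T0 T2) :=
  { t | t.noUnary ∧ ∃ u, G.Step (.leaf (.inl n)) u ∧ G.chainOnly.Derives u t }

/-- A normalized spine grammar: in normal form, and no spinal tree for a
nullary nonterminal `n` contains `n`. -/
def Normalized (G : SCFTG N0 N1 T0 T2) : Prop :=
  G.InNormalForm ∧ ∀ n : N0, ∀ t ∈ G.spinalTrees n, ¬ t.hasLeaf (Sum.inl n)

end SCFTG

/-! ### Context-free grammars with set-based rules, and the spines CFG -/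

/-- A context-free grammar over terminals `T` and nonterminals `NT`. -/
structure MiniCFG (T NT : Type) where
  start : NT
  rules : Set (NT × List (NT ⊕ T))

namespace MiniCFG

variable {T NT : Type}

/-- One derivation step. -/
def Step (g : MiniCFG T NT) : List (NT ⊕ T) → List (NT ⊕ T) → Prop :=
  fun u v => ∃ p ∈ g.rules, ∃ x y : List (NT ⊕ T),
    u = x ++ [Sum.inl p.1] ++ y ∧ v = x ++ p.2 ++ y

/-- The generated language. -/
def language (g : MiniCFG T NT) : Language T :=
  { w | Relation.ReflTransGen g.Step [Sum.inl g.start] (w.map Sum.inr) }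

end MiniCFG

/-- Nonterminal annotations `N = N₀ ∪ N₁`. -/
abbrev NTS (N0 N1 : Type) := N0 ⊕ N1

/-- The alphabet `Σ' = (Σ₀ × N) ∪ (Σ₂ × N × N)` of annotated spine symbols. -/
abbrev Sig (N0 N1 T0 T2 : Type) :=
  (T0 × NTS N0 N1) ⊕ (T2 × NTS N0 N1 × NTS N0 N1)

/-- The CFG `G'` generating the spines `S(G)` of a spine grammar `G`
(Definition "spines" of the paper). Its nonterminals are `{⊤} ∪ N²`
(`none` playing the role of `⊤`). -/
def spineCFG {N0 N1 T0 T2 : Type} (G : SCFTG N0 N1 T0 T2) :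
    MiniCFG (Sig N0 N1 T0 T2) (Option (NTS N0 N1 × NTS N0 N1)) where
  start := none
  rules :=
    { r |
      -- ⊤ → α_n for start productions n → α
      (∃ (n : N0) (α : T0), (n, Tree3.leaf (Sum.inr α)) ∈ G.P0 ∧
        r = (none, [Sum.inr (Sum.inl (α, Sum.inl n))])) ∨
      -- ⊤ → α_n b_n for start productions n → b(α)
      (∃ (n : N0) (α : T0) (b : N1),
        (n, Tree3.un b (Tree3.leaf (Sum.inr α))) ∈ G.P0 ∧
        r = (none, [Sum.inr (Sum.inl (α, Sum.inl n)),
                    Sum.inl (some (Sum.inr b, Sum.inl n))])) ∨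
      -- n_g → b'_g b_g for chain productions n → b(b'(□)) and g ∈ N
      (∃ (n b b' : N1) (g : NTS N0 N1),
        (n, Ctx3.un b (Ctx3.un b' Ctx3.hole)) ∈ G.P1 ∧
        r = (some (Sum.inr n, g),
             [Sum.inl (some (Sum.inr b', g)), Sum.inl (some (Sum.inr b, g))])) ∨
      -- n_g → (σ, g, n') for terminal productions n → σ(□, n') and g ∈ N
      (∃ (n : N1) (σ : T2) (a : N0) (g : NTS N0 N1),
        (n, Ctx3.binL σ Ctx3.hole (Tree3.leaf (Sum.inl a))) ∈ G.P1 ∧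
        r = (some (Sum.inr n, g), [Sum.inr (Sum.inr (σ, g, Sum.inl a))])) ∨
      -- n_g → (σ, n', g) for terminal productions n → σ(n', □) and g ∈ N
      (∃ (n : N1) (σ : T2) (a : N0) (g : NTS N0 N1),
        (n, Ctx3.binR σ (Tree3.leaf (Sum.inl a)) Ctx3.hole) ∈ G.P1 ∧
        r = (some (Sum.inr n, g), [Sum.inr (Sum.inr (σ, Sum.inl a, g))])) }

/-! ### Reassembling spines into trees: `attach` and `F(L)` -/

/-- A generator structure on leaf symbols `Lf` and binary symbols `Bn` with
nonterminal annotations `NN`: each leaf symbol carries a generator, each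
binary symbol a spine direction (`false` = first child, `true` = second child)
and two annotations. -/
structure GenStr (Lf Bn NN : Type) where
  genL : Lf → NN
  dir : Bn → Bool
  ann : Bn → Bool → NN

namespace GenStr

variable {Lf Bn NN : Type}

/-- The generator `gen` of a binary symbol: its annotation in spine
direction. -/
def genB (g : GenStr Lf Bn NN) (b : Bn) : NN := g.ann b (g.dir b)

/-- The generator stored in the root label of a tree. -/
def rootGen (g : GenStr Lf Bn NN) : Tree3 Lf Empty Bn → NN
  | .leaf a => g.genL a
  | .un e _ => e.elim
  | .bin b _ _ => g.genB b

/-- `attach` along a reversed spine (top-to-bottom list of binary symbols). -/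
def attachRev (g : GenStr Lf Bn NN) (T : Set (Tree3 Lf Empty Bn)) (a : Lf) :
    List Bn → Set (Tree3 Lf Empty Bn)
  | [] => {Tree3.leaf a}
  | s :: w =>
    { t | ∃ t₁ t₂, t = .bin s t₁ t₂ ∧
        (if g.dir s then
          t₂ ∈ g.attachRev T a w ∧ t₁ ∈ T ∧ g.rootGen t₁ = g.ann s false
        else
          t₁ ∈ g.attachRev T a w ∧ t₂ ∈ T ∧ g.rootGen t₂ = g.ann s true) }

/-- `attach_T(w)` for a word `w` (a leaf symbol followed by binary symbols,
read from bottom to top). -/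
def attachSet (g : GenStr Lf Bn NN) (T : Set (Tree3 Lf Empty Bn))
    (w : List (Lf ⊕ Bn)) : Set (Tree3 Lf Empty Bn) :=
  { t | ∃ (a : Lf) (ss : List Bn),
      w = Sum.inl a :: ss.map Sum.inr ∧ t ∈ g.attachRev T a ss.reverse }

/-- `F(L)`: the smallest tree language `T` with `attach_T(w) ⊆ T` for every
`w ∈ L`. -/
def FLang (g : GenStr Lf Bn NN) (L : Set (List (Lf ⊕ Bn))) :
    Set (Tree3 Lf Empty Bn) :=
  ⋂₀ { T | ∀ w ∈ L, g.attachSet T w ⊆ T }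

/-- `F(L)_n`: the trees of `F(L)` whose root generator is `n`. -/
def FLangAt (g : GenStr Lf Bn NN) (L : Set (List (Lf ⊕ Bn))) (n : NN) :
    Set (Tree3 Lf Empty Bn) :=
  { t | t ∈ g.FLang L ∧ g.rootGen t = n }

end GenStr

/-- The generator structure on the spine alphabet `Σ'`. -/
def spineGenStr {N0 N1 T0 T2 : Type} (d : T2 → Bool) :
    GenStr (T0 × NTS N0 N1) (T2 × NTS N0 N1 × NTS N0 N1) (NTS N0 N1) where
  genL a := a.2
  dir b := d b.1
  ann b i := if i then b.2.2 else b.2.1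

/-! ### Auxiliary development for Statement 7 -/

namespace SpinesProof

open Tree3

variable {N0 N1 T0 T2 : Type}

/-- Projection `π` of annotated trees to terminal trees. -/
def proj : Tree3 (T0 × NTS N0 N1) Empty (T2 × NTS N0 N1 × NTS N0 N1) →
    Tree3 T0 Empty T2 :=
  Tree3.map Prod.fst id Prod.fst

/-- Inductive characterization of derivability in a normalized spine grammar.
`Gen G (.inl n) t` : the terminal tree `t` is derivable from `n`.
`Gen G (.inr (b, u)) t` : `t` is derivable from `un b u` (`u` terminal). -/
inductive Gen (G : SCFTG N0 N1 T0 T2) :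
    (N0 ⊕ N1 × Tree3 T0 Empty T2) → Tree3 T0 Empty T2 → Prop
  | g0a {n α} : (n, .leaf (.inr α)) ∈ G.P0 → Gen G (.inl n) (.leaf α)
  | g0b {n b α t} : (n, .un b (.leaf (.inr α))) ∈ G.P0 →
      Gen G (.inr (b, .leaf α)) t → Gen G (.inl n) t
  | chain {n b1 b2 u v t} : (n, Ctx3.un b1 (Ctx3.un b2 .hole)) ∈ G.P1 →
      Gen G (.inr (b2, u)) v → Gen G (.inr (b1, v)) t → Gen G (.inr (n, u)) t
  | tl {n σ a u s} : (n, Ctx3.binL σ .hole (.leaf (.inl a))) ∈ G.P1 →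
      Gen G (.inl a) s → Gen G (.inr (n, u)) (.bin σ u s)
  | tr {n σ a u s} : (n, Ctx3.binR σ (.leaf (.inl a)) .hole) ∈ G.P1 →
      Gen G (.inl a) s → Gen G (.inr (n, u)) (.bin σ s u)

/-! #### Context composition and lifted steps -/

def ccomp {L U B : Type} : Ctx3 L U B → Ctx3 L U B → Ctx3 L U B
  | .hole, D => D
  | .un u C, D => .un u (ccomp C D)
  | .binL b C s, D => .binL b (ccomp C D) s
  | .binR b s C, D => .binR b s (ccomp C D)

lemma ccomp_subst {L U B : Type} (C D : Ctx3 L U B) (t : Tree3 L U B) :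
    (ccomp C D).subst t = C.subst (D.subst t) := by
  induction C <;> simp [ccomp, Ctx3.subst, *]

lemma step_ctx {G : SCFTG N0 N1 T0 T2} (C : Ctx3 (N0 ⊕ T0) N1 T2)
    {s s'} (h : G.Step s s') : G.Step (C.subst s) (C.subst s') := by
  cases h with
  | p0 D n r hr =>
      rw [← ccomp_subst, ← ccomp_subst]; exact .p0 _ n r hr
  | p1 D n r t' hr =>
      rw [← ccomp_subst, ← ccomp_subst]; exact .p1 _ n r t' hr

lemma derives_ctx {G : SCFTG N0 N1 T0 T2} (C : Ctx3 (N0 ⊕ T0) N1 T2)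
    {s s'} (h : G.Derives s s') : G.Derives (C.subst s) (C.subst s') := by
  induction h with
  | refl => exact Relation.ReflTransGen.refl
  | tail _ h ih => exact ih.tail (step_ctx C h)

/-! #### `Gen` implies derivability -/

lemma gen_derives {G : SCFTG N0 N1 T0 T2} {x t} (h : Gen G x t) :
    (∀ n, x = .inl n → G.Derives (.leaf (.inl n)) (SCFTG.embed t)) ∧
    (∀ b u, x = .inr (b, u) →
      G.Derives (.un b (SCFTG.embed u)) (SCFTG.embed t)) := by
  induction h with
  | @g0a n α hm =>
      refine ⟨?_, by rintro _ _ ⟨⟩⟩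
      rintro n' hn'
      cases hn'
      exact Relation.ReflTransGen.single (SCFTG.Step.p0 .hole n _ hm)
  | @g0b n b α t hm _ ih =>
      refine ⟨?_, by rintro _ _ ⟨⟩⟩
      rintro n' hn'
      cases hn'
      exact Relation.ReflTransGen.head (SCFTG.Step.p0 .hole n _ hm)
        (ih.2 b (.leaf α) rfl)
  | @chain n b1 b2 u v t hm _ _ ih1 ih2 =>
      refine ⟨by rintro _ ⟨⟩, ?_⟩
      rintro b' u' hb'
      cases hb'
      refine Relation.ReflTransGen.head
        (SCFTG.Step.p1 .hole n _ (SCFTG.embed u) hm) ?_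
      exact Relation.ReflTransGen.trans
        (derives_ctx (.un b1 .hole) (ih1.2 b2 u rfl)) (ih2.2 b1 v rfl)
  | @tl n σ a u s hm _ ih =>
      refine ⟨by rintro _ ⟨⟩, ?_⟩
      rintro b' u' hb'
      cases hb'
      refine Relation.ReflTransGen.head
        (SCFTG.Step.p1 .hole n _ (SCFTG.embed u) hm) ?_
      exact derives_ctx (.binR σ (SCFTG.embed u) .hole) (ih.1 a rfl)
  | @tr n σ a u s hm _ ih =>
      refine ⟨by rintro _ ⟨⟩, ?_⟩
      rintro b' u' hb'
      cases hb'
      refine Relation.ReflTransGen.head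
        (SCFTG.Step.p1 .hole n _ (SCFTG.embed u) hm) ?_
      exact derives_ctx (.binL σ .hole (SCFTG.embed u)) (ih.1 a rfl)

/-! #### Derivability implies `Gen`: backward closure of `Sat` -/

def Sat (G : SCFTG N0 N1 T0 T2) :
    SForm N0 N1 T0 T2 → Tree3 T0 Empty T2 → Prop
  | .leaf (.inl n), t => Gen G (.inl n) t
  | .leaf (.inr α), t => t = .leaf α
  | .un b s, t => ∃ u, Sat G s u ∧ Gen G (.inr (b, u)) t
  | .bin σ s1 s2, t => ∃ t1 t2, t = .bin σ t1 t2 ∧ Sat G s1 t1 ∧ Sat G s2 t2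

lemma sat_embed (G : SCFTG N0 N1 T0 T2) (t : Tree3 T0 Empty T2) :
    Sat G (SCFTG.embed t) t := by
  induction t with
  | leaf a => rfl
  | un e _ => exact e.elim
  | bin σ t1 t2 ih1 ih2 => exact ⟨t1, t2, rfl, ih1, ih2⟩

lemma sat_ctx_mono {G : SCFTG N0 N1 T0 T2} (C : Ctx3 (N0 ⊕ T0) N1 T2)
    {r s : SForm N0 N1 T0 T2} (h : ∀ x, Sat G r x → Sat G s x) :
    ∀ t, Sat G (C.subst r) t → Sat G (C.subst s) t := by
  induction C with
  | hole => exact h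
  | un b C ih =>
      rintro t ⟨u, hu, hg⟩; exact ⟨u, ih u hu, hg⟩
  | binL σ C s' ih =>
      rintro t ⟨t1, t2, rfl, h1, h2⟩; exact ⟨t1, t2, rfl, ih t1 h1, h2⟩
  | binR σ s' C ih =>
      rintro t ⟨t1, t2, rfl, h1, h2⟩; exact ⟨t1, t2, rfl, h1, ih t2 h2⟩

lemma sat_step {G : SCFTG N0 N1 T0 T2} (hnf : G.InNormalForm)
    {s s'} (h : G.Step s s') : ∀ t, Sat G s' t → Sat G s t := by
  cases h with
  | p0 C n r hr =>
      refine sat_ctx_mono C ?_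
      obtain ⟨α, hα | ⟨b, hb⟩⟩ := hnf.1 _ hr
      · subst hα
        rintro x rfl
        exact Gen.g0a hr
      · subst hb
        rintro x ⟨u, rfl, hg⟩
        exact Gen.g0b hr hg
  | p1 C n r t' hr =>
      refine sat_ctx_mono C ?_
      rcases hnf.2 _ hr with ⟨b1, b2, hb⟩ | ⟨σ, a, -, hL | hR⟩
      · subst hb
        rintro x ⟨v, ⟨u, hu, hg2⟩, hg1⟩
        exact ⟨u, hu, Gen.chain hr hg2 hg1⟩
      · subst hL
        rintro x ⟨t1, t2, rfl, h1, h2⟩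
        exact ⟨t1, h1, Gen.tl hr h2⟩
      · subst hR
        rintro x ⟨t1, t2, rfl, h1, h2⟩
        exact ⟨t2, h2, Gen.tr hr h1⟩

lemma sat_derives {G : SCFTG N0 N1 T0 T2} (hnf : G.InNormalForm)
    {s s'} (h : G.Derives s s') : ∀ t, Sat G s' t → Sat G s t := by
  induction h using Relation.ReflTransGen.head_induction_on with
  | refl => exact fun _ => id
  | head hstep _ ih => exact fun t ht => sat_step hnf hstep t (ih t ht)

lemma derivFrom_eq_gen {G : SCFTG N0 N1 T0 T2} (hnf : G.InNormalForm)
    (n : N0) : G.derivFrom n = {t | Gen G (.inl n) t} := by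
  ext t
  constructor
  · intro h
    exact sat_derives hnf h t (sat_embed G t)
  · intro h
    exact (gen_derives h).1 n rfl

end SpinesProof
namespace SpinesProof

variable {N0 N1 T0 T2 : Type}

/-! #### Yield of the spines CFG -/

/-- Terminal words derivable from nonterminals of the spines CFG. -/
inductive Yld (G : SCFTG N0 N1 T0 T2) :
    Option (NTS N0 N1 × NTS N0 N1) → List (Sig N0 N1 T0 T2) → Prop
  | t1 {n α} : (n, .leaf (.inr α)) ∈ G.P0 → Yld G none [.inl (α, .inl n)]
  | t2 {n α b u} : (n, .un b (.leaf (.inr α))) ∈ G.P0 →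
      Yld G (some (.inr b, .inl n)) u → Yld G none (.inl (α, .inl n) :: u)
  | ch {n b b' g u v} : (n, Ctx3.un b (Ctx3.un b' .hole)) ∈ G.P1 →
      Yld G (some (.inr b', g)) u → Yld G (some (.inr b, g)) v →
      Yld G (some (.inr n, g)) (u ++ v)
  | tl {n σ a g} : (n, Ctx3.binL σ .hole (.leaf (.inl a))) ∈ G.P1 →
      Yld G (some (.inr n, g)) [.inr (σ, g, .inl a)]
  | tr {n σ a g} : (n, Ctx3.binR σ (.leaf (.inl a)) .hole) ∈ G.P1 →
      Yld G (some (.inr n, g)) [.inr (σ, .inl a, g)]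

/-- Satisfaction of sentential forms of the spines CFG. -/
inductive SatL (G : SCFTG N0 N1 T0 T2) :
    List (Option (NTS N0 N1 × NTS N0 N1) ⊕ Sig N0 N1 T0 T2) →
    List (Sig N0 N1 T0 T2) → Prop
  | nil : SatL G [] []
  | consT {a s w} : SatL G s w → SatL G (.inr a :: s) (a :: w)
  | consN {X s u w} : Yld G X u → SatL G s w → SatL G (.inl X :: s) (u ++ w)

lemma satL_refl (G : SCFTG N0 N1 T0 T2) (w : List (Sig N0 N1 T0 T2)) :
    SatL G (w.map Sum.inr) w := by
  induction w with
  | nil => exact .nil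
  | cons a w ih => exact .consT ih

lemma satL_append {G : SCFTG N0 N1 T0 T2} {x y w1 w2}
    (h1 : SatL G x w1) (h2 : SatL G y w2) : SatL G (x ++ y) (w1 ++ w2) := by
  induction h1 with
  | nil => exact h2
  | consT _ ih => exact .consT ih
  | consN hY _ ih => rw [List.append_assoc]; exact .consN hY ih

lemma satL_append_inv {G : SCFTG N0 N1 T0 T2} :
    ∀ (x y : List (Option (NTS N0 N1 × NTS N0 N1) ⊕ Sig N0 N1 T0 T2)) (w),
      SatL G (x ++ y) w →
      ∃ w1 w2, w = w1 ++ w2 ∧ SatL G x w1 ∧ SatL G y w2 := by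
  intro x
  induction x with
  | nil => exact fun y w h => ⟨[], _, rfl, .nil, h⟩
  | cons s x ih =>
      intro y w h
      cases h with
      | consT h =>
          obtain ⟨w1, w2, rfl, hx, hy⟩ := ih _ _ h
          exact ⟨_ :: w1, w2, rfl, .consT hx, hy⟩
      | consN hY h =>
          obtain ⟨w1, w2, rfl, hx, hy⟩ := ih _ _ h
          exact ⟨_ ++ w1, w2, by simp, .consN hY hx, hy⟩

lemma satL_nil_inv {G : SCFTG N0 N1 T0 T2} {w} (h : SatL G [] w) : w = [] := by
  cases h; rfl

/-- A rule's right-hand side satisfying a word yields that word. -/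
lemma rule_sat {G : SCFTG N0 N1 T0 T2}
    {p : Option (NTS N0 N1 × NTS N0 N1) ×
      List (Option (NTS N0 N1 × NTS N0 N1) ⊕ Sig N0 N1 T0 T2)}
    (hp : p ∈ (spineCFG G).rules) {w} (h : SatL G p.2 w) : Yld G p.1 w := by
  rcases hp with ⟨n, α, hm, rfl⟩ | ⟨n, α, b, hm, rfl⟩ |
    ⟨n, b, b', g, hm, rfl⟩ | ⟨n, σ, a, g, hm, rfl⟩ | ⟨n, σ, a, g, hm, rfl⟩
  · cases h with
    | consT h => cases satL_nil_inv h; exact .t1 hm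
  · cases h with
    | consT h =>
        cases h with
        | consN hY h =>
            cases satL_nil_inv h
            rw [List.append_nil]
            exact .t2 hm hY
  · cases h with
    | consN hY h =>
        cases h with
        | consN hY' h =>
            cases satL_nil_inv h
            rw [List.append_nil]
            exact .ch hm hY hY'
  · cases h with
    | consT h => cases satL_nil_inv h; exact .tl hm
  · cases h with
    | consT h => cases satL_nil_inv h; exact .tr hm

lemma satL_step {G : SCFTG N0 N1 T0 T2} {s s'}
    (h : (spineCFG G).Step s s') {w} (hs : SatL G s' w) : SatL G s w := by
  obtain ⟨p, hp, x, y, rfl, rfl⟩ := h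
  rw [List.append_assoc] at hs
  obtain ⟨w1, w2, rfl, hx, hrest⟩ := satL_append_inv _ _ _ hs
  obtain ⟨wm, wy, rfl, hm, hy⟩ := satL_append_inv _ _ _ hrest
  rw [List.append_assoc]
  exact satL_append hx (.consN (rule_sat hp hm) hy)

lemma satL_derives {G : SCFTG N0 N1 T0 T2} {s s'}
    (h : Relation.ReflTransGen (spineCFG G).Step s s') {w}
    (hs : SatL G s' w) : SatL G s w := by
  induction h using Relation.ReflTransGen.head_induction_on with
  | refl => exact hs
  | head hstep _ ih => exact satL_step hstep ih

/-! Completeness: `Yld` words are in the CFG language. -/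

lemma mstep_append {T NT : Type} {g : MiniCFG T NT} {u v} (x y : List (NT ⊕ T))
    (h : g.Step u v) : g.Step (x ++ u ++ y) (x ++ v ++ y) := by
  obtain ⟨p, hp, a, b, rfl, rfl⟩ := h
  exact ⟨p, hp, x ++ a, b ++ y, by simp, by simp⟩

lemma mderives_append {T NT : Type} {g : MiniCFG T NT} {u v}
    (h : Relation.ReflTransGen g.Step u v) (x y : List (NT ⊕ T)) :
    Relation.ReflTransGen g.Step (x ++ u ++ y) (x ++ v ++ y) := by
  induction h with
  | refl => exact .refl
  | tail _ h ih => exact ih.tail (mstep_append x y h)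

lemma mstep_rule {T NT : Type} {g : MiniCFG T NT} {X rhs}
    (h : (X, rhs) ∈ g.rules) : g.Step [Sum.inl X] rhs :=
  ⟨(X, rhs), h, [], [], rfl, by simp⟩

lemma yld_derives {G : SCFTG N0 N1 T0 T2} {X w} (h : Yld G X w) :
    Relation.ReflTransGen (spineCFG G).Step [Sum.inl X] (w.map Sum.inr) := by
  induction h with
  | @t1 n α hm =>
      exact Relation.ReflTransGen.single
        (mstep_rule (Or.inl ⟨n, α, hm, rfl⟩))
  | @t2 n α b u hm _ ih =>
      refine Relation.ReflTransGen.head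
        (mstep_rule (Or.inr (Or.inl ⟨n, α, b, hm, rfl⟩))) ?_
      have := mderives_append ih [Sum.inr (Sum.inl (α, Sum.inl n))] []
      simpa using this
  | @ch n b b' g u v hm h1 h2 ih1 ih2 =>
      refine Relation.ReflTransGen.head
        (mstep_rule (Or.inr (Or.inr (Or.inl ⟨n, b, b', g, hm, rfl⟩)))) ?_
      have h1 := mderives_append ih1 [] [Sum.inl (some (Sum.inr b, g))]
      have h2 := mderives_append ih2 (u.map Sum.inr) []
      simp only [List.nil_append, List.append_nil] at h1 h2
      refine h1.trans ?_
      simpa using h2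
  | @tl n σ a g hm =>
      exact Relation.ReflTransGen.single
        (mstep_rule (Or.inr (Or.inr (Or.inr (Or.inl ⟨n, σ, a, g, hm, rfl⟩)))))
  | @tr n σ a g hm =>
      exact Relation.ReflTransGen.single
        (mstep_rule (Or.inr (Or.inr (Or.inr (Or.inr ⟨n, σ, a, g, hm, rfl⟩)))))

/-- Characterization of the language of the spines CFG. -/
lemma lang_iff_yld {G : SCFTG N0 N1 T0 T2} {w} :
    w ∈ (spineCFG G).language ↔ Yld G none w := by
  constructor
  · intro h
    have hsat := satL_derives h (satL_refl G w)
    clear h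
    cases hsat with
    | consN hY hnil =>
        cases satL_nil_inv hnil
        simpa [spineCFG] using hY
  · exact fun h => yld_derives h

end SpinesProof
namespace SpinesProof

variable {N0 N1 T0 T2 : Type}

/-! #### Binary-symbol yields -/

inductive YB (G : SCFTG N0 N1 T0 T2) (g : NTS N0 N1) :
    N1 → List (T2 × NTS N0 N1 × NTS N0 N1) → Prop
  | ch {n b b' u v} : (n, Ctx3.un b (Ctx3.un b' .hole)) ∈ G.P1 →
      YB G g b' u → YB G g b v → YB G g n (u ++ v)
  | tl {n σ a} : (n, Ctx3.binL σ .hole (.leaf (.inl a))) ∈ G.P1 →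
      YB G g n [(σ, g, .inl a)]
  | tr {n σ a} : (n, Ctx3.binR σ (.leaf (.inl a)) .hole) ∈ G.P1 →
      YB G g n [(σ, .inl a, g)]

lemma yld_to_yb {G : SCFTG N0 N1 T0 T2} {X w} (h : Yld G X w) :
    ∀ b g, X = some (.inr b, g) → ∃ ss, w = ss.map Sum.inr ∧ YB G g b ss := by
  induction h with
  | t1 _ => rintro _ _ ⟨⟩
  | t2 _ _ _ => rintro _ _ ⟨⟩
  | @ch n b b' g u v hm h1 h2 ih1 ih2 =>
      rintro b0 g0 h0
      obtain ⟨rfl, rfl⟩ : b0 = n ∧ g0 = g := by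
        injection h0 with h0; injection h0 with h1 h2
        exact ⟨(Sum.inr_injective h1).symm ▸ rfl, h2 ▸ rfl⟩
      obtain ⟨ss1, rfl, hy1⟩ := ih1 b' g0 rfl
      obtain ⟨ss2, rfl, hy2⟩ := ih2 b g0 rfl
      exact ⟨ss1 ++ ss2, by simp, .ch hm hy1 hy2⟩
  | @tl n σ a g hm =>
      rintro b0 g0 h0
      obtain ⟨rfl, rfl⟩ : b0 = n ∧ g0 = g := by
        injection h0 with h0; injection h0 with h1 h2
        exact ⟨(Sum.inr_injective h1).symm ▸ rfl, h2 ▸ rfl⟩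
      exact ⟨[(σ, g0, .inl a)], rfl, .tl hm⟩
  | @tr n σ a g hm =>
      rintro b0 g0 h0
      obtain ⟨rfl, rfl⟩ : b0 = n ∧ g0 = g := by
        injection h0 with h0; injection h0 with h1 h2
        exact ⟨(Sum.inr_injective h1).symm ▸ rfl, h2 ▸ rfl⟩
      exact ⟨[(σ, .inl a, g0)], rfl, .tr hm⟩

lemma yb_to_yld {G : SCFTG N0 N1 T0 T2} {g b ss} (h : YB G g b ss) :
    Yld G (some (.inr b, g)) (ss.map Sum.inr) := by
  induction h with
  | ch hm _ _ ih1 ih2 => rw [List.map_append]; exact .ch hm ih1 ih2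
  | tl hm => exact .tl hm
  | tr hm => exact .tr hm

/-! #### `Build`: `attachRev` with an arbitrary base -/

section Build

variable {Lf Bn NN : Type}

def Build (gs : GenStr Lf Bn NN) (T : Set (Tree3 Lf Empty Bn))
    (base : Set (Tree3 Lf Empty Bn)) :
    List Bn → Set (Tree3 Lf Empty Bn)
  | [] => base
  | s :: w =>
    { t | ∃ t₁ t₂, t = .bin s t₁ t₂ ∧
        (if gs.dir s then
          t₂ ∈ Build gs T base w ∧ t₁ ∈ T ∧ gs.rootGen t₁ = gs.ann s false
        else
          t₁ ∈ Build gs T base w ∧ t₂ ∈ T ∧ gs.rootGen t₂ = gs.ann s true) }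

lemma attachRev_eq_build (gs : GenStr Lf Bn NN) (T) (a : Lf) :
    ∀ ss, gs.attachRev T a ss = Build gs T {Tree3.leaf a} ss := by
  intro ss
  induction ss with
  | nil => rfl
  | cons s w ih => simp only [GenStr.attachRev, Build, ih]

lemma build_append (gs : GenStr Lf Bn NN) (T base) :
    ∀ (x y : List Bn), Build gs T base (x ++ y) =
      Build gs T (Build gs T base y) x := by
  intro x y
  induction x with
  | nil => rfl
  | cons s w ih => simp only [List.cons_append, Build, List.append_eq, ih]

lemma build_mono (gs : GenStr Lf Bn NN) {T T' base base' : Set (Tree3 Lf Empty Bn)}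
    (hT : T ⊆ T') (hb : base ⊆ base') :
    ∀ ss, Build gs T base ss ⊆ Build gs T' base' ss := by
  intro ss
  induction ss with
  | nil => exact hb
  | cons s w ih =>
      rintro t ⟨t1, t2, rfl, hc⟩
      refine ⟨t1, t2, rfl, ?_⟩
      by_cases hdir : gs.dir s <;> simp only [hdir, if_true, if_false] at hc ⊢
      · exact ⟨ih hc.1, hT hc.2.1, hc.2.2⟩
      · exact ⟨ih hc.1, hT hc.2.1, hc.2.2⟩

lemma attachSet_mono (gs : GenStr Lf Bn NN) {T T' : Set (Tree3 Lf Empty Bn)}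
    (hT : T ⊆ T') (w) : gs.attachSet T w ⊆ gs.attachSet T' w := by
  rintro t ⟨a, ss, rfl, ht⟩
  refine ⟨a, ss, rfl, ?_⟩
  rw [attachRev_eq_build] at ht ⊢
  exact build_mono gs hT (subset_refl _) _ ht

lemma flang_le (gs : GenStr Lf Bn NN) {L T}
    (h : ∀ w ∈ L, gs.attachSet T w ⊆ T) : gs.FLang L ⊆ T :=
  Set.sInter_subset_of_mem h

lemma flang_closed (gs : GenStr Lf Bn NN) (L) :
    ∀ w ∈ L, gs.attachSet (gs.FLang L) w ⊆ gs.FLang L := by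
  intro w hw t ht
  refine Set.mem_sInter.mpr fun T hT => ?_
  exact hT w hw
    (attachSet_mono gs (fun x hx => Set.mem_sInter.mp hx T hT) w ht)

end Build

end SpinesProof
namespace SpinesProof

variable {N0 N1 T0 T2 : Type}

/-- Abbreviation for the annotated tree type. -/
abbrev ATr (N0 N1 T0 T2 : Type) :=
  Tree3 (T0 × NTS N0 N1) Empty (T2 × NTS N0 N1 × NTS N0 N1)

/-! #### Soundness: `F(S(G))` projects into derivable trees -/

lemma yb_build_sound {G : SCFTG N0 N1 T0 T2} {d : T2 → Bool}
    (hd : G.IsSpine d) {T : Set (ATr N0 N1 T0 T2)}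
    (hT : ∀ s ∈ T, ∀ n0 : N0,
      (spineGenStr d).rootGen s = .inl n0 → Gen G (.inl n0) (proj s))
    {g b ss} (h : YB G g b ss) :
    ∀ base t, t ∈ Build (spineGenStr d) T base ss.reverse →
      (∃ t0 ∈ base, Gen G (.inr (b, proj t0)) (proj t)) ∧
        (spineGenStr d).rootGen t = g := by
  induction h with
  | @ch n b1 b2 u v hm h1 h2 ih1 ih2 =>
      intro base t ht
      rw [List.reverse_append, build_append] at ht
      obtain ⟨⟨t1, ht1, hg1⟩, hroot⟩ := ih2 _ _ ht
      obtain ⟨⟨t0, ht0, hg0⟩, -⟩ := ih1 _ _ ht1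
      exact ⟨⟨t0, ht0, Gen.chain hm hg0 hg1⟩, hroot⟩
  | @tl n σ a hm =>
      intro base t ht
      have hdσ : d σ = false := (hd _ hm).1
      obtain ⟨t1, t2, rfl, hc⟩ := ht
      rw [show (spineGenStr d).dir (σ, g, Sum.inl a) = false from hdσ] at hc
      simp only [if_false, Bool.false_eq_true] at hc
      obtain ⟨hb, hmem, hgen⟩ := hc
      have hga : (spineGenStr d).rootGen t2 = Sum.inl a := hgen
      refine ⟨⟨t1, hb, ?_⟩, ?_⟩
      · exact Gen.tl hm (hT t2 hmem a hga)
      · show (spineGenStr d).genB (σ, g, Sum.inl a) = g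
        simp [GenStr.genB, spineGenStr, hdσ]
  | @tr n σ a hm =>
      intro base t ht
      have hdσ : d σ = true := (hd _ hm).1
      obtain ⟨t1, t2, rfl, hc⟩ := ht
      rw [show (spineGenStr d).dir (σ, Sum.inl a, g) = true from hdσ] at hc
      simp only [if_true] at hc
      obtain ⟨hb, hmem, hgen⟩ := hc
      have hga : (spineGenStr d).rootGen t1 = Sum.inl a := hgen
      refine ⟨⟨t2, hb, ?_⟩, ?_⟩
      · exact Gen.tr hm (hT t1 hmem a hga)
      · show (spineGenStr d).genB (σ, Sum.inl a, g) = g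
        simp [GenStr.genB, spineGenStr, hdσ]

lemma flang_sound {G : SCFTG N0 N1 T0 T2} {d : T2 → Bool}
    (hd : G.IsSpine d) :
    ∀ t ∈ (spineGenStr d).FLang (spineCFG G).language,
      ∀ n0 : N0, (spineGenStr d).rootGen t = .inl n0 →
        Gen G (.inl n0) (proj t) := by
  set T : Set (ATr N0 N1 T0 T2) :=
    { t | ∀ n0 : N0, (spineGenStr d).rootGen t = .inl n0 →
        Gen G (.inl n0) (proj t) } with hTdef
  have hle : (spineGenStr d).FLang (spineCFG G).language ⊆ T := by
    refine flang_le _ ?_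
    intro w hw
    replace hw := lang_iff_yld.mp hw
    rintro t ⟨a, ss, hw', ht⟩
    cases hw with
    | @t1 n α hm =>
        obtain ⟨ha, hss⟩ : Sum.inl (α, Sum.inl n) = Sum.inl a ∧
            ([] : List (Sig N0 N1 T0 T2)) = ss.map Sum.inr := by
          injection hw' with h1 h2; exact ⟨h1, h2⟩
        obtain rfl : ss = [] := by
          cases ss with
          | nil => rfl
          | cons s ss => simp at hss
        cases Sum.inl_injective ha
        obtain rfl : t = .leaf (α, Sum.inl n) := ht
        intro n0 hn0
        obtain rfl : n = n0 := Sum.inl_injective hn0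
        exact Gen.g0a hm
    | @t2 n α b u hm hu =>
        obtain ⟨ha, hss⟩ : Sum.inl (α, Sum.inl n) = Sum.inl a ∧
            u = ss.map Sum.inr := by
          injection hw' with h1 h2; exact ⟨h1, h2⟩
        cases Sum.inl_injective ha
        obtain ⟨ss', hss', hyb⟩ := yld_to_yb hu b (Sum.inl n) rfl
        obtain rfl : ss = ss' := by
          apply List.map_injective_iff.mpr Sum.inr_injective
          rw [← hss, ← hss']
        rw [attachRev_eq_build] at ht
        have hsound := yb_build_sound hd (fun s hs => hs) hyb _ _ ht
        obtain ⟨⟨t0, ht0, hg⟩, hroot⟩ := hsound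
        obtain rfl : t0 = .leaf (α, Sum.inl n) := ht0
        intro n0 hn0
        rw [hroot] at hn0
        cases Sum.inl_injective hn0
        exact Gen.g0b hm hg
  exact fun t ht => hle ht

/-! #### Completeness: derivable trees are projections of `F(S(G))` -/

lemma gen_complete {G : SCFTG N0 N1 T0 T2} {d : T2 → Bool}
    (hd : G.IsSpine d) {x t} (h : Gen G x t) :
    (∀ n : N0, x = .inl n →
      ∃ t' ∈ (spineGenStr d).FLang (spineCFG G).language,
        (spineGenStr d).rootGen t' = .inl n ∧ proj t' = t) ∧
    (∀ (b : N1) (u), x = .inr (b, u) →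
      ∀ (g : NTS N0 N1) (t0 : ATr N0 N1 T0 T2), proj t0 = u →
        ∃ ss t', YB G g b ss ∧
          t' ∈ Build (spineGenStr d)
            ((spineGenStr d).FLang (spineCFG G).language) {t0} ss.reverse ∧
          proj t' = t ∧ (spineGenStr d).rootGen t' = g) := by
  induction h with
  | @g0a n α hm =>
      refine ⟨?_, by rintro _ _ ⟨⟩⟩
      rintro n' hn'
      cases hn'
      refine ⟨.leaf (α, Sum.inl n), ?_, rfl, rfl⟩
      exact flang_closed _ _ _ (lang_iff_yld.mpr (Yld.t1 hm))
        ⟨(α, Sum.inl n), [], rfl, rfl⟩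
  | @g0b n b α t hm h1 ih =>
      refine ⟨?_, by rintro _ _ ⟨⟩⟩
      rintro n' hn'
      cases hn'
      obtain ⟨ss, t', hyb, hmem, hproj, hroot⟩ :=
        ih.2 b (.leaf α) rfl (Sum.inl n) (.leaf (α, Sum.inl n)) rfl
      refine ⟨t', ?_, hroot, hproj⟩
      refine flang_closed _ _ (Sum.inl (α, Sum.inl n) :: ss.map Sum.inr) ?_ ?_
      · exact lang_iff_yld.mpr (Yld.t2 hm (yb_to_yld hyb))
      · refine ⟨(α, Sum.inl n), ss, rfl, ?_⟩
        rw [attachRev_eq_build]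
        exact hmem
  | @chain n b1 b2 u v t hm h1 h2 ih1 ih2 =>
      refine ⟨by rintro _ ⟨⟩, ?_⟩
      rintro b' u' hb' g t0 h0
      cases hb'
      obtain ⟨ss2, t2', hyb2, hmem2, hproj2, hroot2⟩ := ih1.2 b2 u rfl g t0 h0
      obtain ⟨ss1, t1', hyb1, hmem1, hproj1, hroot1⟩ :=
        ih2.2 b1 v rfl g t2' hproj2
      refine ⟨ss2 ++ ss1, t1', YB.ch hm hyb2 hyb1, ?_, hproj1, hroot1⟩
      rw [List.reverse_append, build_append]
      refine build_mono _ (subset_refl _) ?_ _ hmem1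
      intro x hx
      cases hx
      exact hmem2
  | @tl n σ a u s hm h1 ih =>
      refine ⟨by rintro _ ⟨⟩, ?_⟩
      rintro b' u' hb' g t0 h0
      cases hb'
      obtain ⟨ts, hts, hroot, hproj⟩ := ih.1 a rfl
      have hdσ : d σ = false := (hd _ hm).1
      refine ⟨[(σ, g, Sum.inl a)], .bin (σ, g, Sum.inl a) t0 ts,
        YB.tl hm, ?_, ?_, ?_⟩
      · refine ⟨t0, ts, rfl, ?_⟩
        rw [show (spineGenStr d).dir (σ, g, Sum.inl a) = false from hdσ]
        simp only [if_false, Bool.false_eq_true]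
        exact ⟨rfl, hts, hroot⟩
      · show Tree3.bin σ (proj t0) (proj ts) = _
        rw [h0, hproj]
      · show (spineGenStr d).genB (σ, g, Sum.inl a) = g
        simp [GenStr.genB, spineGenStr, hdσ]
  | @tr n σ a u s hm h1 ih =>
      refine ⟨by rintro _ ⟨⟩, ?_⟩
      rintro b' u' hb' g t0 h0
      cases hb'
      obtain ⟨ts, hts, hroot, hproj⟩ := ih.1 a rfl
      have hdσ : d σ = true := (hd _ hm).1
      refine ⟨[(σ, Sum.inl a, g)], .bin (σ, Sum.inl a, g) ts t0,
        YB.tr hm, ?_, ?_, ?_⟩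
      · refine ⟨ts, t0, rfl, ?_⟩
        rw [show (spineGenStr d).dir (σ, Sum.inl a, g) = true from hdσ]
        simp only [if_true]
        exact ⟨rfl, hts, hroot⟩
      · show Tree3.bin σ (proj ts) (proj t0) = _
        rw [h0, hproj]
      · show (spineGenStr d).genB (σ, Sum.inl a, g) = g
        simp [GenStr.genB, spineGenStr, hdσ]

/-! #### Putting everything together -/

lemma main_eq {G : SCFTG N0 N1 T0 T2} {d : T2 → Bool}
    (hd : G.IsSpine d) (hnf : G.InNormalForm) (n : N0) :
    Tree3.map Prod.fst id Prod.fst ''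
        (spineGenStr d).FLangAt (spineCFG G).language (Sum.inl n)
      = G.derivFrom n := by
  rw [derivFrom_eq_gen hnf]
  ext t
  constructor
  · rintro ⟨t', ⟨hF, hroot⟩, rfl⟩
    exact flang_sound hd t' hF n hroot
  · intro h
    obtain ⟨t', hF, hroot, hproj⟩ := (gen_complete hd h).1 n rfl
    exact ⟨t', ⟨hF, hroot⟩, hproj⟩

end SpinesProof

/-- For a normalized spine grammar `G`,
`π(F(S(G))_S) = T(G)`, where `π` projects every annotated symbol to its
terminal component; more generally `π(F(S(G))_n)` is the set of terminal trees
derivable in `G` from the nullary nonterminal `n`. -/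
theorem spines_describe_tree_language (N0 N1 T0 T2 : Type)
    [Fintype N0] [Fintype N1] [Fintype T0] [Fintype T2]
    (G : SCFTG N0 N1 T0 T2) (d : T2 → Bool) (hd : G.IsSpine d)
    (hn : G.Normalized) :
    Tree3.map Prod.fst id Prod.fst ''
        (spineGenStr d).FLangAt (spineCFG G).language (Sum.inl G.start)
      = G.lang ∧
    ∀ n : N0,
      Tree3.map Prod.fst id Prod.fst ''
          (spineGenStr d).FLangAt (spineCFG G).language (Sum.inl n)
        = G.derivFrom n := by
  exact ⟨SpinesProof.main_eq hd hn.1 G.start,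
    fun n => SpinesProof.main_eq hd hn.1 n⟩
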